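/- arXiv:2105.12557 — 3 statements merged into one kernel-verified Lean document; each statement's English description precedes it below -/
import Mathlib

section
/- For a finite simple graph G, the following are equivalent: (i) ∂_s(G) = n(G)·Δ(G)/(Δ(G)+2), i.e., (Δ(G)+2)·∂_s(G) = n(G)·Δ(G); (ii) γ₂(G) = 2n(G)/(Δ(G)+2), i.e., (Δ(G)+2)·γ₂(G) = 2n(G). -/
open Finset

namespace StrongDifferential

variable {V : Type*} [Fintype V] [DecidableEq V] (G : SimpleGraph V) [DecidableRel G.Adj]

/-- The external neighbourhood `N_e(D)` of a set `D`: vertices outside `D`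
with a neighbour in `D`. -/
def extNbhd (D : Finset V) : Finset V :=
  univ.filter fun u => u ∉ D ∧ ∃ v ∈ D, G.Adj u v

/-- The external private neighbourhood `epn(v, D)` of `v` with respect to `D`. -/
def epn (v : V) (D : Finset V) : Finset V :=
  univ.filter fun u => u ∉ D ∧ G.neighborFinset u ∩ D = {v}

/-- `D_w`: the vertices of `D` having a nonempty external private neighbourhood. -/
def weak (D : Finset V) : Finset V :=
  D.filter fun v => (epn G v D).Nonempty

/-- `D_s = D \ D_w`. -/
def strong (D : Finset V) : Finset V :=
  D \ weak G D

/-- The strong differential `∂ₛ(D) = |N_e(D)| - |D_w|` of a set `D`. -/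
def sdiffSet (D : Finset V) : ℤ :=
  (extNbhd G D).card - (weak G D).card

/-- The strong differential `∂ₛ(G) = max {∂ₛ(D) : D ⊆ V(G)}` of the graph `G`. -/
def sdiff : ℤ :=
  (univ : Finset V).powerset.sup' ⟨∅, empty_mem_powerset _⟩ (sdiffSet G)

/-- The differential `∂(D) = |N_e(D)| - |D|` of a set `D`. -/
def diffSet (D : Finset V) : ℤ :=
  (extNbhd G D).card - D.card

/-- The differential `∂(G) = max {∂(D) : D ⊆ V(G)}` of the graph `G`. -/
def gdiff : ℤ :=
  (univ : Finset V).powerset.sup' ⟨∅, empty_mem_powerset _⟩ (diffSet G)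

/-- A dominating set: every vertex outside `D` has a neighbour in `D`. -/
def IsDomSet (D : Finset V) : Prop :=
  ∀ v, v ∉ D → ∃ u ∈ D, G.Adj v u

/-- The domination number `γ(G)`. -/
noncomputable def gamma : ℕ :=
  sInf {k | ∃ D : Finset V, IsDomSet G D ∧ D.card = k}

/-- A 2-dominating set: every vertex outside `D` has at least two neighbours in `D`. -/
def Is2DomSet (D : Finset V) : Prop :=
  ∀ v, v ∉ D → 2 ≤ (G.neighborFinset v ∩ D).card

/-- The 2-domination number `γ₂(G)`. -/
noncomputable def gamma2 : ℕ :=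
  sInf {k | ∃ D : Finset V, Is2DomSet G D ∧ D.card = k}

/-- An Italian dominating function: `f : V → {0,1,2}` such that every
vertex of weight `0` has total weight at least `2` on its neighbourhood. -/
def IsIDF (f : V → ℕ) : Prop :=
  (∀ v, f v ≤ 2) ∧ ∀ v, f v = 0 → 2 ≤ ∑ u ∈ G.neighborFinset v, f u

/-- The Italian domination number `γ_I(G)`. -/
noncomputable def italian : ℕ :=
  sInf {k | ∃ f : V → ℕ, IsIDF G f ∧ ∑ v, f v = k}

/-- `σ(G)`: the number of vertices adjacent to at least two leaves. -/
def sigmaSupp : ℕ :=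
  (univ.filter fun v => 2 ≤ ((G.neighborFinset v).filter fun u => G.degree u = 1).card).card

/-- The independence number `α(G)`. -/
noncomputable def indepNum : ℕ :=
  sSup {k | ∃ S : Finset V, (∀ u ∈ S, ∀ w ∈ S, u ≠ w → ¬ G.Adj u w) ∧ S.card = k}

/-- The vertex cover number `β(G)`. -/
noncomputable def vcNum : ℕ :=
  sInf {k | ∃ S : Finset V, (∀ u v, G.Adj u v → u ∈ S ∨ v ∈ S) ∧ S.card = k}

/-- A semitotal dominating set: a dominating set in which every vertex is
within distance two of another vertex of the set. -/
def IsSemitotalDomSet (D : Finset V) : Prop :=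
  IsDomSet G D ∧ ∀ v ∈ D, ∃ u ∈ D, u ≠ v ∧ (G.Adj v u ∨ ∃ w, G.Adj v w ∧ G.Adj w u)

/-- The semitotal domination number `γ_{t2}(G)`. -/
noncomputable def gammaT2 : ℕ :=
  sInf {k | ∃ D : Finset V, IsSemitotalDomSet G D ∧ D.card = k}

set_option linter.unusedSectionVars false

-- double counting
lemma sum_card_inter (S : Finset V) :
    ∑ u, (G.neighborFinset u ∩ S).card = ∑ v ∈ S, G.degree v := by
  have h1 : ∀ u : V, (G.neighborFinset u ∩ S) = S.filter (fun v => G.Adj u v) := by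
    intro u; ext v; simp [SimpleGraph.mem_neighborFinset, and_comm]
  simp only [h1, Finset.card_filter]
  rw [Finset.sum_comm]
  refine Finset.sum_congr rfl fun v _ => ?_
  rw [← Finset.card_filter]
  simp only [SimpleGraph.degree, SimpleGraph.neighborFinset_eq_filter]
  congr 1
  ext u
  simp [G.adj_comm]

lemma two_le_key {D : Finset V} {u : V} (hu : u ∈ extNbhd G D) :
    2 ≤ (G.neighborFinset u ∩ D).card + (G.neighborFinset u ∩ weak G D).card := by
  simp only [extNbhd, mem_filter, mem_univ, true_and] at hu
  obtain ⟨huD, v, hvD, hadj⟩ := hu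
  have hne : (G.neighborFinset u ∩ D).Nonempty :=
    ⟨v, by simp [SimpleGraph.mem_neighborFinset, hadj, hvD]⟩
  rcases le_or_gt 2 (G.neighborFinset u ∩ D).card with h2 | h2
  · exact le_add_right h2
  · have h1 : (G.neighborFinset u ∩ D).card = 1 := by
      have := Finset.card_pos.mpr hne; omega
    obtain ⟨w, hw⟩ := Finset.card_eq_one.mp h1
    have hwmem : w ∈ G.neighborFinset u ∩ D := hw ▸ Finset.mem_singleton_self w
    have hwD : w ∈ D := (Finset.mem_inter.mp hwmem).2
    have hwN : w ∈ G.neighborFinset u := (Finset.mem_inter.mp hwmem).1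
    have hwweak : w ∈ weak G D := by
      simp only [weak, mem_filter]
      exact ⟨hwD, u, by simp only [epn, mem_filter, mem_univ, true_and]; exact ⟨huD, hw⟩⟩
    have : 1 ≤ (G.neighborFinset u ∩ weak G D).card :=
      Finset.card_pos.mpr ⟨w, Finset.mem_inter.mpr ⟨hwN, hwweak⟩⟩
    omega

lemma key (D : Finset V) :
    2 * (extNbhd G D).card ≤ G.maxDegree * (D.card + (weak G D).card) := by
  have h1 : 2 * (extNbhd G D).card ≤
      ∑ u ∈ extNbhd G D, ((G.neighborFinset u ∩ D).card + (G.neighborFinset u ∩ weak G D).card) := by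
    calc 2 * (extNbhd G D).card = ∑ _u ∈ extNbhd G D, 2 := by
          rw [Finset.sum_const]; ring
      _ ≤ _ := Finset.sum_le_sum fun u hu => two_le_key G hu
  have h2 : ∑ u ∈ extNbhd G D, ((G.neighborFinset u ∩ D).card + (G.neighborFinset u ∩ weak G D).card)
      ≤ ∑ u, ((G.neighborFinset u ∩ D).card + (G.neighborFinset u ∩ weak G D).card) :=
    Finset.sum_le_sum_of_subset (Finset.subset_univ _)
  simp only [Finset.sum_add_distrib] at h1 h2
  rw [sum_card_inter, sum_card_inter] at h2
  have h3 : ∑ v ∈ D, G.degree v ≤ G.maxDegree * D.card := by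
    calc ∑ v ∈ D, G.degree v ≤ ∑ _v ∈ D, G.maxDegree :=
          Finset.sum_le_sum fun v _ => G.degree_le_maxDegree v
      _ = G.maxDegree * D.card := by rw [Finset.sum_const]; ring
  have h4 : ∑ v ∈ weak G D, G.degree v ≤ G.maxDegree * (weak G D).card := by
    calc ∑ v ∈ weak G D, G.degree v ≤ ∑ _v ∈ weak G D, G.maxDegree :=
          Finset.sum_le_sum fun v _ => G.degree_le_maxDegree v
      _ = _ := by rw [Finset.sum_const]; ring
  calc 2 * (extNbhd G D).card ≤ _ := h1.trans h2
    _ ≤ G.maxDegree * D.card + G.maxDegree * (weak G D).card := by omega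
    _ = _ := by ring

lemma refined (D : Finset V) :
    ((G.maxDegree : ℤ) + 2) * sdiffSet G D + 2 * (weak G D).card
      + (G.maxDegree : ℤ) * ((univ \ (D ∪ extNbhd G D)).card : ℤ)
      ≤ (Fintype.card V : ℤ) * G.maxDegree := by
  have hdisj : Disjoint D (extNbhd G D) := by
    rw [Finset.disjoint_right]
    intro u hu
    simp only [extNbhd, mem_filter] at hu
    exact hu.2.1
  have hsub : D ∪ extNbhd G D ⊆ univ := subset_univ _
  have hcard : (univ \ (D ∪ extNbhd G D)).card + D.card + (extNbhd G D).card
      = Fintype.card V := by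
    rw [Finset.card_sdiff_of_subset hsub, Finset.card_union_of_disjoint hdisj, Finset.card_univ]
    have : D.card + (extNbhd G D).card ≤ Fintype.card V := by
      rw [← Finset.card_union_of_disjoint hdisj, ← Finset.card_univ]
      exact Finset.card_le_card hsub
    omega
  have hw : (weak G D).card ≤ D.card := Finset.card_le_card (Finset.filter_subset _ _)
  have hk := key G D
  have hk' : (2 : ℤ) * (extNbhd G D).card ≤ (G.maxDegree : ℤ) * (D.card + (weak G D).card) := by
    exact_mod_cast hk
  unfold sdiffSet
  have hcard' : ((univ \ (D ∪ extNbhd G D)).card : ℤ) + D.card + (extNbhd G D).card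
      = Fintype.card V := by exact_mod_cast hcard
  have hw' : ((weak G D).card : ℤ) ≤ D.card := by exact_mod_cast hw
  nlinarith [hk', hcard', hw']

lemma le_sdiff (D : Finset V) : sdiffSet G D ≤ sdiff G :=
  Finset.le_sup' (sdiffSet G) (Finset.mem_powerset.mpr (subset_univ D))

lemma sdiff_upper :
    ((G.maxDegree : ℤ) + 2) * sdiff G ≤ (Fintype.card V : ℤ) * G.maxDegree := by
  obtain ⟨D, -, hD⟩ := Finset.exists_mem_eq_sup' (⟨∅, empty_mem_powerset _⟩ :
    (univ : Finset V).powerset.Nonempty) (sdiffSet G)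
  rw [sdiff, hD]
  have := refined G D
  have h1 : (0 : ℤ) ≤ 2 * (weak G D).card := by positivity
  have h2 : (0 : ℤ) ≤ (G.maxDegree : ℤ) * ((univ \ (D ∪ extNbhd G D)).card : ℤ) := by positivity
  linarith

lemma gamma2_witness : ∃ S : Finset V, Is2DomSet G S ∧ S.card = gamma2 G := by
  have hne : {k | ∃ D : Finset V, Is2DomSet G D ∧ D.card = k}.Nonempty :=
    ⟨(univ : Finset V).card, univ, fun v hv => absurd (mem_univ v) hv, rfl⟩
  exact Nat.sInf_mem hne

lemma twodom_count {S : Finset V} (h : Is2DomSet G S) :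
    2 * Fintype.card V ≤ (G.maxDegree + 2) * S.card := by
  have h1 : 2 * (univ \ S).card ≤ ∑ u ∈ univ \ S, (G.neighborFinset u ∩ S).card := by
    calc 2 * (univ \ S).card = ∑ _u ∈ univ \ S, 2 := by rw [Finset.sum_const]; ring
      _ ≤ _ := Finset.sum_le_sum fun u hu => h u (Finset.mem_sdiff.mp hu).2
  have h2 : ∑ u ∈ univ \ S, (G.neighborFinset u ∩ S).card
      ≤ ∑ u, (G.neighborFinset u ∩ S).card :=
    Finset.sum_le_sum_of_subset (Finset.subset_univ _)
  rw [sum_card_inter] at h2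
  have h3 : ∑ v ∈ S, G.degree v ≤ G.maxDegree * S.card := by
    calc ∑ v ∈ S, G.degree v ≤ ∑ _v ∈ S, G.maxDegree :=
          Finset.sum_le_sum fun v _ => G.degree_le_maxDegree v
      _ = _ := by rw [Finset.sum_const]; ring
  have h4 : (univ \ S).card = Fintype.card V - S.card := by
    rw [Finset.card_sdiff_of_subset (subset_univ _), Finset.card_univ]
  have h5 : S.card ≤ Fintype.card V := Finset.card_le_univ S
  have := (h1.trans h2).trans h3
  rw [h4] at this
  have hgoal : (G.maxDegree + 2) * S.card = G.maxDegree * S.card + 2 * S.card := by ring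
  rw [hgoal]
  generalize G.maxDegree * S.card = m at this ⊢
  omega

lemma twodom_sdiffSet {S : Finset V} (h : Is2DomSet G S) :
    sdiffSet G S = (Fintype.card V : ℤ) - S.card := by
  have hA : extNbhd G S = univ \ S := by
    ext u
    simp only [extNbhd, mem_filter, mem_univ, true_and, Finset.mem_sdiff]
    constructor
    · exact fun h' => h'.1
    · intro hu
      refine ⟨hu, ?_⟩
      have := h u hu
      have hne : (G.neighborFinset u ∩ S).Nonempty := Finset.card_pos.mp (by omega)
      obtain ⟨v, hv⟩ := hne
      rw [Finset.mem_inter, SimpleGraph.mem_neighborFinset] at hv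
      exact ⟨v, hv.2, hv.1⟩
  have hW : weak G S = ∅ := by
    rw [Finset.eq_empty_iff_forall_notMem]
    intro v hv
    simp only [weak, mem_filter] at hv
    obtain ⟨u, hu⟩ := hv.2
    simp only [epn, mem_filter, mem_univ, true_and] at hu
    have := h u hu.1
    rw [hu.2, Finset.card_singleton] at this
    omega
  rw [sdiffSet, hA, hW, Finset.card_empty, Finset.card_sdiff_of_subset (subset_univ _), Finset.card_univ]
  have h5 : S.card ≤ Fintype.card V := Finset.card_le_univ S
  push_cast [h5]
  ring

lemma no_adj (h : G.maxDegree = 0) : ∀ u v : V, ¬ G.Adj u v := by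
  intro u v hadj
  have h1 : 0 < G.degree u :=
    Finset.card_pos.mpr ⟨v, (SimpleGraph.mem_neighborFinset G u v).mpr hadj⟩
  have h2 := G.degree_le_maxDegree u
  omega

lemma sdiff_zero (h : G.maxDegree = 0) : sdiff G = 0 := by
  have hD : ∀ D : Finset V, sdiffSet G D = 0 := by
    intro D
    have hA : extNbhd G D = ∅ := by
      rw [Finset.eq_empty_iff_forall_notMem]
      intro u hu
      simp only [extNbhd, mem_filter, mem_univ, true_and] at hu
      obtain ⟨-, v, -, hadj⟩ := hu
      exact no_adj G h u v hadj
    have hW : weak G D = ∅ := by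
      rw [Finset.eq_empty_iff_forall_notMem]
      intro v hv
      simp only [weak, mem_filter] at hv
      obtain ⟨u, hu⟩ := hv.2
      simp only [epn, mem_filter, mem_univ, true_and] at hu
      have hNu : G.neighborFinset u = ∅ := by
        rw [Finset.eq_empty_iff_forall_notMem]
        intro w hw
        exact no_adj G h u w ((SimpleGraph.mem_neighborFinset G u w).mp hw)
      rw [hNu, Finset.empty_inter] at hu
      exact (Finset.singleton_ne_empty v) hu.2.symm
    rw [sdiffSet, hA, hW]
    simp
  refine le_antisymm ?_ ?_
  · exact Finset.sup'_le _ _ fun D _ => le_of_eq (hD D)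
  · rw [← hD ∅]
    exact le_sdiff G ∅

lemma gamma2_all (h : G.maxDegree = 0) : gamma2 G = Fintype.card V := by
  obtain ⟨S, hS, hcard⟩ := gamma2_witness G
  have : S = univ := by
    rw [Finset.eq_univ_iff_forall]
    intro v
    by_contra hv
    have := hS v hv
    have h1 : (G.neighborFinset v ∩ S).card ≤ G.degree v :=
      Finset.card_le_card (Finset.inter_subset_left)
    have h2 := G.degree_le_maxDegree v
    omega
  rw [← hcard, this, Finset.card_univ]

theorem stmt_16 {V : Type*} [Fintype V] [DecidableEq V] (G : SimpleGraph V)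
    [DecidableRel G.Adj] :
    ((G.maxDegree : ℤ) + 2) * sdiff G = (Fintype.card V : ℤ) * G.maxDegree ↔
      (G.maxDegree + 2) * gamma2 G = 2 * Fintype.card V := by
  constructor
  · intro h
    by_cases hΔ : G.maxDegree = 0
    · rw [hΔ, gamma2_all G hΔ]
    · obtain ⟨D, -, hD⟩ := Finset.exists_mem_eq_sup' (⟨∅, empty_mem_powerset _⟩ :
        (univ : Finset V).powerset.Nonempty) (sdiffSet G)
      have href := refined G D
      rw [sdiff] at h
      rw [hD] at h
      rw [h] at href
      have hd1 : (1 : ℤ) ≤ (G.maxDegree : ℤ) := by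
        exact_mod_cast Nat.one_le_iff_ne_zero.mpr hΔ
      have ha : (0 : ℤ) ≤ ((weak G D).card : ℤ) := Int.ofNat_nonneg _
      have hb : (0 : ℤ) ≤ ((univ \ (D ∪ extNbhd G D)).card : ℤ) := Int.ofNat_nonneg _
      have hdb : ((univ \ (D ∪ extNbhd G D)).card : ℤ)
          ≤ (G.maxDegree : ℤ) * ((univ \ (D ∪ extNbhd G D)).card : ℤ) :=
        le_mul_of_one_le_left hb hd1
      have hdb0 : (0 : ℤ) ≤ (G.maxDegree : ℤ) * ((univ \ (D ∪ extNbhd G D)).card : ℤ) :=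
        mul_nonneg (by positivity) hb
      have hW : (weak G D).card = 0 := by
        have : ((weak G D).card : ℤ) = 0 := le_antisymm (by linarith) ha
        exact_mod_cast this
      have hR : (univ \ (D ∪ extNbhd G D)).card = 0 := by
        have : ((univ \ (D ∪ extNbhd G D)).card : ℤ) = 0 := le_antisymm (by linarith) hb
        exact_mod_cast this
      have hWe : weak G D = ∅ := Finset.card_eq_zero.mp hW
      have hUe : D ∪ extNbhd G D = univ := by
        have h0 : univ \ (D ∪ extNbhd G D) = ∅ := Finset.card_eq_zero.mp hR
        have := Finset.sdiff_eq_empty_iff_subset.mp h0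
        exact le_antisymm (subset_univ _) this
      have h2dom : Is2DomSet G D := by
        intro v hv
        have hvA : v ∈ extNbhd G D := by
          have hvu : v ∈ D ∪ extNbhd G D := hUe ▸ mem_univ v
          rcases Finset.mem_union.mp hvu with h' | h'
          · exact absurd h' hv
          · exact h'
        by_contra hlt
        push_neg at hlt
        have hne : (G.neighborFinset v ∩ D).Nonempty := by
          simp only [extNbhd, mem_filter, mem_univ, true_and] at hvA
          obtain ⟨-, w, hwD, hadj⟩ := hvA
          exact ⟨w, Finset.mem_inter.mpr ⟨(SimpleGraph.mem_neighborFinset G v w).mpr hadj, hwD⟩⟩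
        have h1 : (G.neighborFinset v ∩ D).card = 1 := by
          have := Finset.card_pos.mpr hne; omega
        obtain ⟨w, hw⟩ := Finset.card_eq_one.mp h1
        have hwmem : w ∈ G.neighborFinset v ∩ D := hw ▸ Finset.mem_singleton_self w
        have hwweak : w ∈ weak G D := by
          simp only [weak, mem_filter]
          refine ⟨(Finset.mem_inter.mp hwmem).2, v, ?_⟩
          simp only [epn, mem_filter, mem_univ, true_and]
          exact ⟨hv, hw⟩
        rw [hWe] at hwweak
        exact absurd hwweak (Finset.notMem_empty w)
      have hsd : sdiffSet G D = (Fintype.card V : ℤ) - D.card := twodom_sdiffSet G h2dom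
      have hDcard : ((G.maxDegree : ℤ) + 2) * D.card = 2 * Fintype.card V := by
        rw [hsd] at h
        linear_combination -h
      have hDcardN : (G.maxDegree + 2) * D.card = 2 * Fintype.card V := by
        exact_mod_cast hDcard
      have hle : gamma2 G ≤ D.card := Nat.sInf_le ⟨D, h2dom, rfl⟩
      obtain ⟨S, hS, hc⟩ := gamma2_witness G
      have hlow : 2 * Fintype.card V ≤ (G.maxDegree + 2) * gamma2 G := by
        rw [← hc]; exact twodom_count G hS
      have hup : (G.maxDegree + 2) * gamma2 G ≤ (G.maxDegree + 2) * D.card :=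
        Nat.mul_le_mul_left _ hle
      rw [hDcardN] at hup
      exact le_antisymm hup hlow
  · intro h
    obtain ⟨S, hS, hc⟩ := gamma2_witness G
    have h1 : sdiffSet G S = (Fintype.card V : ℤ) - S.card := twodom_sdiffSet G hS
    have h2 : sdiffSet G S ≤ sdiff G := le_sdiff G S
    have h3 := sdiff_upper G
    have h4 : ((G.maxDegree : ℤ) + 2) * S.card = 2 * Fintype.card V := by
      rw [hc]; exact_mod_cast h
    refine le_antisymm h3 ?_
    have h5 : ((G.maxDegree : ℤ) + 2) * sdiffSet G S ≤ ((G.maxDegree : ℤ) + 2) * sdiff G :=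
      mul_le_mul_of_nonneg_left h2 (by positivity)
    rw [h1] at h5
    have h6 : ((G.maxDegree : ℤ) + 2) * ((Fintype.card V : ℤ) - S.card)
        = (Fintype.card V : ℤ) * G.maxDegree := by linear_combination -h4
    linarith


end StrongDifferential
end

section
/- If G is a finite simple graph with minimum degree δ(G) ≥ 2, then ∂_s(G) ≥ α(G), where α(G) is the independence number of G. -/
open Finset

namespace StrongDifferential

variable {V : Type*} [Fintype V] [DecidableEq V] (G : SimpleGraph V) [DecidableRel G.Adj]

theorem stmt_17 {V : Type*} [Fintype V] [DecidableEq V] (G : SimpleGraph V)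
    [DecidableRel G.Adj] (hδ : 2 ≤ G.minDegree) :
    (indepNum G : ℤ) ≤ sdiff G := by
  classical
  set Idx := {k | ∃ S : Finset V, (∀ u ∈ S, ∀ w ∈ S, u ≠ w → ¬ G.Adj u w) ∧ S.card = k}
  have hne : Idx.Nonempty := ⟨0, ∅, by simp, by simp⟩
  have hbdd : BddAbove Idx := by
    refine ⟨Fintype.card V, fun k hk => ?_⟩
    obtain ⟨S, _, rfl⟩ := hk
    simpa using S.card_le_univ
  obtain ⟨S, hSindep, hScard⟩ := Nat.sSup_mem hne hbdd
  set D : Finset V := univ \ S with hD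
  have hnbr : ∀ u ∈ S, G.neighborFinset u ⊆ D := by
    intro u hu w hw
    rw [SimpleGraph.mem_neighborFinset] at hw
    simp only [hD, mem_sdiff, mem_univ, true_and]
    intro hwS
    exact hSindep u hu w hwS (G.ne_of_adj hw) hw
  have hdeg : ∀ u : V, 2 ≤ G.degree u := fun u => hδ.trans (G.minDegree_le_degree u)
  have hext : extNbhd G D = S := by
    ext u
    simp only [extNbhd, mem_filter, mem_univ, true_and, hD, mem_sdiff, not_and, not_not]
    constructor
    · rintro ⟨h1, -⟩
      exact h1
    · intro huS
      refine ⟨huS, ?_⟩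
      have hnon : (G.neighborFinset u).Nonempty := by
        rw [← card_pos, G.card_neighborFinset_eq_degree]
        have := hdeg u; omega
      obtain ⟨w, hw⟩ := hnon
      have hwD := hnbr u huS hw
      exact ⟨w, (mem_sdiff.mp hwD).2, (SimpleGraph.mem_neighborFinset G u w).mp hw⟩
  have hweak : weak G D = ∅ := by
    rw [eq_empty_iff_forall_notMem]
    intro v hv
    simp only [weak, mem_filter] at hv
    obtain ⟨u, hu⟩ := hv.2
    simp only [epn, mem_filter, mem_univ, true_and, hD, mem_sdiff, not_and, not_not] at hu
    obtain ⟨huS', hcap⟩ := hu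
    have h1 : G.neighborFinset u ∩ D = G.neighborFinset u :=
      inter_eq_left.mpr (hnbr u huS')
    have h2 : G.neighborFinset u = {v} := by
      rw [← h1]
      simpa [hD] using hcap
    have := hdeg u
    rw [← G.card_neighborFinset_eq_degree, h2, card_singleton] at this
    omega
  have hval : sdiffSet G D = (S.card : ℤ) := by
    simp [sdiffSet, hext, hweak]
  have hle : sdiffSet G D ≤ sdiff G :=
    Finset.le_sup' (sdiffSet G) (mem_powerset.mpr (subset_univ D))
  have : (indepNum G : ℤ) = (S.card : ℤ) := by
    rw [indepNum]; exact_mod_cast hScard.symm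
  rw [this, ← hval]
  exact hle

end StrongDifferential
end

section
/- Let G be a finite simple graph without isolated vertices. Then ∂_s(G) ≤ n(G) − γ_{t2}(G), where γ_{t2}(G) is the semitotal domination number of G. -/
open Finset

namespace StrongDifferential

variable {V : Type*} [Fintype V] [DecidableEq V] (G : SimpleGraph V) [DecidableRel G.Adj]

theorem stmt_19 {V : Type*} [Fintype V] [DecidableEq V] (G : SimpleGraph V)
    [DecidableRel G.Adj] (h : ∀ v : V, 0 < G.degree v) :
    sdiff G ≤ (Fintype.card V : ℤ) - gammaT2 G := by
  classical
  unfold sdiff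
  apply Finset.sup'_le
  intro D _
  set W := weak G D with hW
  set E := extNbhd G D with hE
  set b : V → V := fun v => if hv : (epn G v D).Nonempty then hv.choose else v with hb
  have hbmem : ∀ v ∈ W, b v ∉ D ∧ G.neighborFinset (b v) ∩ D = {v} := by
    intro v hv
    have hv' : (epn G v D).Nonempty := (Finset.mem_filter.mp hv).2
    have hsp := hv'.choose_spec
    simp only [epn, Finset.mem_filter, Finset.mem_univ, true_and] at hsp
    have hbv : b v = hv'.choose := dif_pos hv'
    rw [hbv]
    exact hsp
  set S : Finset V := (univ \ E) ∪ W.image b with hS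
  have hDsub : D ⊆ S := by
    intro v hv
    apply Finset.mem_union_left
    simp only [Finset.mem_sdiff, Finset.mem_univ, true_and]
    intro hvE
    exact (Finset.mem_filter.mp hvE).2.1 hv
  have hnbne : ∀ v : V, (G.neighborFinset v).Nonempty := by
    intro v
    rw [← Finset.card_pos, SimpleGraph.card_neighborFinset_eq_degree]
    exact h v
  have hnotS : ∀ u, u ∉ S → ∃ w ∈ D, G.Adj u w := by
    intro u hu
    have huE : u ∈ E := by
      by_contra huE
      exact hu (Finset.mem_union_left _ (Finset.mem_sdiff.mpr ⟨Finset.mem_univ u, huE⟩))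
    obtain ⟨-, w, hwD, hadj⟩ := (Finset.mem_filter.mp huE).2
    exact ⟨w, hwD, hadj⟩
  have hdom : IsDomSet G S := by
    intro v hv
    obtain ⟨w, hwD, hadj⟩ := hnotS v hv
    exact ⟨w, hDsub hwD, hadj⟩
  have hsemi : IsSemitotalDomSet G S := by
    refine ⟨hdom, ?_⟩
    intro v hv
    by_cases hvD : v ∈ D
    · by_cases hvW : v ∈ W
      · obtain ⟨hbD, hnb⟩ := hbmem v hvW
        have hvin : v ∈ G.neighborFinset (b v) ∩ D := by
          rw [hnb]; exact Finset.mem_singleton_self v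
        have hadj : G.Adj (b v) v :=
          (SimpleGraph.mem_neighborFinset _ _ _).mp (Finset.mem_inter.mp hvin).1
        refine ⟨b v, Finset.mem_union_right _ (Finset.mem_image_of_mem b hvW), ?_,
          Or.inl hadj.symm⟩
        intro heq; rw [heq] at hbD; exact hbD hvD
      · obtain ⟨u, hu⟩ := hnbne v
        have hadj : G.Adj v u := (SimpleGraph.mem_neighborFinset _ _ _).mp hu
        by_cases huD : u ∈ D
        · exact ⟨u, hDsub huD, hadj.ne', Or.inl hadj⟩
        · have hne : G.neighborFinset u ∩ D ≠ {v} := by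
            intro hc
            refine hvW (Finset.mem_filter.mpr ⟨hvD, ⟨u, ?_⟩⟩)
            exact Finset.mem_filter.mpr ⟨Finset.mem_univ u, huD, hc⟩
          have hvmem : v ∈ G.neighborFinset u ∩ D :=
            Finset.mem_inter.mpr ⟨(SimpleGraph.mem_neighborFinset _ _ _).mpr hadj.symm, hvD⟩
          obtain ⟨w, hw, hwv⟩ : ∃ w ∈ G.neighborFinset u ∩ D, w ≠ v := by
            by_contra hc
            push_neg at hc
            exact hne (Finset.eq_singleton_iff_unique_mem.mpr ⟨hvmem, hc⟩)
          obtain ⟨hwn, hwD⟩ := Finset.mem_inter.mp hw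
          exact ⟨w, hDsub hwD, hwv,
            Or.inr ⟨u, hadj, (SimpleGraph.mem_neighborFinset _ _ _).mp hwn⟩⟩
    · obtain ⟨u, hu⟩ := hnbne v
      have hadj : G.Adj v u := (SimpleGraph.mem_neighborFinset _ _ _).mp hu
      by_cases huS : u ∈ S
      · exact ⟨u, huS, hadj.ne', Or.inl hadj⟩
      · obtain ⟨w, hwD, hwadj⟩ := hnotS u huS
        have hwv : w ≠ v := fun heq => hvD (heq ▸ hwD)
        exact ⟨w, hDsub hwD, hwv, Or.inr ⟨u, hadj, hwadj⟩⟩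
  have hγ : gammaT2 G ≤ S.card := Nat.sInf_le ⟨S, hsemi, rfl⟩
  have hcard : S.card ≤ (Fintype.card V - E.card) + W.card := by
    calc S.card ≤ (univ \ E).card + (W.image b).card := Finset.card_union_le _ _
      _ ≤ (Fintype.card V - E.card) + W.card := by
          refine Nat.add_le_add ?_ Finset.card_image_le
          rw [Finset.card_sdiff_of_subset (Finset.subset_univ _), Finset.card_univ]
  have hEle : E.card ≤ Fintype.card V := Finset.card_le_univ E
  simp only [sdiffSet, ← hW, ← hE]
  omega

end StrongDifferential
end
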